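/- For any v ∈ ℝⁿ with n ≥ 1, the function φ(ν) = Σᵢ max(vᵢ − ν, 0) is continuous and nonincreasing in ν, and there exists ν⋆ ∈ [−maxᵢ|vᵢ| − 1, maxᵢ|vᵢ|] with φ(ν⋆) = 1. -/

import Mathlib

/-! Each summand `max (vᵢ - ν) 0` is continuous and nonincreasing in `ν`, hence so is `φ`.
With `M = maxᵢ |vᵢ|`, every summand vanishes at `ν = M`, while at `ν = -M - 1` every summand
is at least `1`, so `φ(-M - 1) ≥ n ≥ 1`; the intermediate value theorem gives the root. -/

section SumPosPartSub

variable {ι : Type*} (s : Finset ι) (v : ι → ℝ)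

theorem continuous_sum_max_sub_zero : Continuous fun ν : ℝ => ∑ i ∈ s, max (v i - ν) 0 :=
  continuous_finsetSum _ fun _ _ => (continuous_const.sub continuous_id).max continuous_const

theorem antitone_sum_max_sub_zero : Antitone fun ν : ℝ => ∑ i ∈ s, max (v i - ν) 0 :=
  fun _ _ hab => Finset.sum_le_sum fun _ _ => max_le_max (by linarith) le_rfl

variable {s v}

theorem sum_max_sub_zero_eq_zero {ν : ℝ} (h : ∀ i ∈ s, v i ≤ ν) :
    ∑ i ∈ s, max (v i - ν) 0 = 0 :=
  Finset.sum_eq_zero fun i hi => max_eq_right (by linarith [h i hi])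

theorem card_le_sum_max_sub_zero {ν : ℝ} (h : ∀ i ∈ s, ν + 1 ≤ v i) :
    (s.card : ℝ) ≤ ∑ i ∈ s, max (v i - ν) 0 := by
  rw [Finset.card_eq_sum_ones, Nat.cast_sum, Nat.cast_one]
  exact Finset.sum_le_sum fun i hi => le_max_of_le_left (by linarith [h i hi])

end SumPosPartSub

/-- `phi ν = ∑ max (v i - ν) 0` is continuous and nonincreasing, and attains the value 1
at some point of `[-maxᵢ|vᵢ| - 1, maxᵢ|vᵢ|]`. -/
theorem simplex_dual_root (n : ℕ) (hn : 0 < n) (v : Fin n → ℝ)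
    (phi : ℝ → ℝ) (hphi : ∀ nu, phi nu = ∑ i, max (v i - nu) 0) :
    Continuous phi ∧ Antitone phi ∧
    ∃ nuStar ∈ Set.Icc
        (-(Finset.univ.sup' (Finset.univ_nonempty_iff.mpr ⟨⟨0, hn⟩⟩) fun i => |v i|) - 1)
        (Finset.univ.sup' (Finset.univ_nonempty_iff.mpr ⟨⟨0, hn⟩⟩) fun i => |v i|),
      phi nuStar = 1 := by
  obtain rfl : phi = fun nu => ∑ i, max (v i - nu) 0 := funext hphi
  set M := Finset.univ.sup' (Finset.univ_nonempty_iff.mpr ⟨⟨0, hn⟩⟩) fun i => |v i|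
  have hcont := continuous_sum_max_sub_zero Finset.univ v
  refine ⟨hcont, antitone_sum_max_sub_zero Finset.univ v, ?_⟩
  have hM : ∀ i, |v i| ≤ M := fun i => Finset.le_sup' (fun j => |v j|) (Finset.mem_univ i)
  have hlt : -M - 1 ≤ M := by linarith [hM ⟨0, hn⟩, abs_nonneg (v ⟨0, hn⟩)]
  have hzero : ∑ i, max (v i - M) 0 = 0 :=
    sum_max_sub_zero_eq_zero fun i _ => (abs_le.mp (hM i)).2
  have hone : (1 : ℝ) ≤ ∑ i, max (v i - (-M - 1)) 0 := by
    have hcard := card_le_sum_max_sub_zero (s := Finset.univ) (v := v) (ν := -M - 1)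
      fun i _ => by linarith [(abs_le.mp (hM i)).1]
    rw [Finset.card_univ, Fintype.card_fin] at hcard
    exact le_trans (by exact_mod_cast hn) hcard
  exact intermediate_value_Icc' hlt hcont.continuousOn ⟨hzero.trans_le zero_le_one, hone⟩
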